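/- arXiv:1605.07046 — 2 statements merged into one kernel-verified Lean document; each statement's English description precedes it below -/
import Mathlib

section
/- Let W = {w_1, ..., w_R} be N-periodic windows with l(w_r) ≤ N/2 for all r, such that for every 0 ≤ m ≤ N/L−1 the matrix A_m = (β_r(m + jN/L))_{r,j} has rank L. If the graph G̃(x, W, L) is connected, then x can be recovered up to a global phase from the magnitude measurements |X_{w_r}(Lm,k)| of its multiple-window STFT; i.e., any y ∈ ℂ^N with the same magnitude measurements satisfies y = e^{iθ} x for some real θ. -/
/-!
By the autocorrelation theorem, the STFT magnitudes at the window position `Lm` determine the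
cyclic autocorrelation of the windowed signal `x · w_r(Lm - ·)`.

At lag `0` this autocorrelation is the value at `Lm` of the cyclic convolution `|x|² ⋆ |w_r|²`.
A sequence vanishing at the multiples of `L` has spectrum summing to zero over each alias class
`{m + jN/L : j < L}`; applied to the difference of these convolutions for `x` and `y`, this says
that `A_m` kills the alias vector of the spectrum of `|x|² - |y|²`, so the rank condition gives
`|x| = |y|`.

At lag `l_r - 1` the support condition `l_r ≤ N/2` leaves a single product, that of the two
endpoints of the window support, so the autocorrelation yields `x(n) conj (x(n'))` for the ends
`n, n'` of each edge of `G̃`. Together with `|x|` this fixes the phase of `x(n')` relative to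
`x(n)`, and connectivity propagates one global phase.
-/

/-- Multiple-window short-time Fourier transform. -/
noncomputable def stft {N : ℕ} [NeZero N] (L : ℕ) (x w : ZMod N → ℂ) (m k : ℕ) : ℂ :=
  (N : ℂ)⁻¹ * ∑ n : ZMod N, x n * w (((L * m : ℕ) : ZMod N) - n) *
    Complex.exp (-(2 * Real.pi * Complex.I * (k : ℂ) * (n.val : ℂ)) / (N : ℂ))

/-- DFT of the squared magnitudes of a vector: `(1/N) ∑_n |u(n)|² e^{-2πikn/N}`. -/
noncomputable def dftSq {N : ℕ} [NeZero N] (u : ZMod N → ℂ) (k : ℕ) : ℂ :=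
  (N : ℂ)⁻¹ * ∑ n : ZMod N, (‖u n‖ ^ 2 : ℝ) *
    Complex.exp (-(2 * Real.pi * Complex.I * (k : ℂ) * (n.val : ℂ)) / (N : ℂ))

open Finset ComplexConjugate ZMod

section DFT

variable {N : ℕ} [NeZero N]

noncomputable def cyclicConv (f g : ZMod N → ℂ) : ZMod N → ℂ :=
  fun c => ∑ n, f n * g (c - n)

noncomputable def conjReflect (f : ZMod N → ℂ) : ZMod N → ℂ :=
  fun n => conj (f (-n))

theorem dft_cyclicConv (f g : ZMod N → ℂ) : 𝓕 (cyclicConv f g) = 𝓕 f * 𝓕 g := by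
  ext k
  rw [Pi.mul_apply, dft_apply, dft_apply, dft_apply, sum_mul_sum]
  simp only [cyclicConv, smul_eq_mul, mul_sum]
  conv_lhs => rw [sum_comm]
  refine sum_congr rfl fun n _ => Fintype.sum_equiv (Equiv.subRight n) _ _ fun c => ?_
  rw [Equiv.subRight_apply, show -(c * k) = -(n * k) + -((c - n) * k) by ring,
    AddChar.map_add_eq_mul]
  ring

theorem dft_conjReflect (f : ZMod N → ℂ) : 𝓕 (conjReflect f) = fun k => conj (𝓕 f k) := by
  ext k
  simp only [dft_apply, conjReflect, smul_eq_mul, map_sum, map_mul]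
  refine Fintype.sum_equiv (Equiv.neg _) _ _ fun n => ?_
  rw [Equiv.neg_apply, ← AddChar.map_neg_eq_conj]
  ring_nf

noncomputable def autocorr (f : ZMod N → ℂ) : ZMod N → ℂ := cyclicConv f (conjReflect f)

theorem dft_autocorr (f : ZMod N → ℂ) (k : ZMod N) : 𝓕 (autocorr f) k = (‖𝓕 f k‖ ^ 2 : ℂ) := by
  rw [autocorr, dft_cyclicConv, dft_conjReflect, Pi.mul_apply, Complex.mul_conj']

theorem autocorr_eq_of_norm_dft_eq {f g : ZMod N → ℂ} (h : ∀ k, ‖𝓕 f k‖ = ‖𝓕 g k‖) :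
    autocorr f = autocorr g :=
  dft.injective <| funext fun k => by rw [dft_autocorr, dft_autocorr, h]

end DFT

theorem Matrix.mulVec_injective_of_rank_eq_card {m n K : Type*} [Fintype n] [Field K]
    {A : Matrix m n K} (h : A.rank = Fintype.card n) : Function.Injective A.mulVec :=
  Matrix.mulVec_injective_iff.2 <| linearIndependent_iff_card_eq_finrank_span.2 <| by
    rw [Set.finrank, ← A.rank_eq_finrank_span_cols, h]

section Aliasing

variable {N : ℕ} [NeZero N]

theorem ZMod.exists_eq_natCast_mul_of_mul_eq_zero {L M : ℕ} (hLM : L * M = N) {n : ZMod N}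
    (h : n * (M : ZMod N) = 0) : ∃ m < M, n = ((L * m : ℕ) : ZMod N) := by
  have hM : 0 < M := Nat.pos_of_mul_pos_left (hLM ▸ Nat.pos_of_neZero N)
  rw [← natCast_zmod_val n, ← Nat.cast_mul, natCast_eq_zero_iff] at h
  obtain ⟨m, hm⟩ := Nat.dvd_of_mul_dvd_mul_right hM (show L * M ∣ n.val * M by rwa [hLM])
  refine ⟨m, Nat.lt_of_mul_lt_mul_left (a := L) ?_, by rw [← hm, natCast_zmod_val]⟩
  rw [← hm, hLM]
  exact n.val_lt

theorem sum_dft_add_eq_zero_of_eq_zero_at_multiples {L M : ℕ} (hLM : L * M = N)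
    {c : ZMod N → ℂ} (hc : ∀ m < M, c ((L * m : ℕ) : ZMod N) = 0) (k : ZMod N) :
    ∑ j ∈ range L, 𝓕 c (k + ((j * M : ℕ) : ZMod N)) = 0 := by
  simp only [dft_apply, smul_eq_mul]
  rw [sum_comm]
  refine sum_eq_zero fun n _ => ?_
  have hpow : ∀ j : ℕ, stdAddChar (-(n * (k + ((j * M : ℕ) : ZMod N)))) * c n
      = stdAddChar (-(n * k)) * c n * stdAddChar (-(n * (M : ZMod N))) ^ j := by
    intro j
    rw [← AddChar.map_nsmul_eq_pow, nsmul_eq_mul,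
      show -(n * (k + ((j * M : ℕ) : ZMod N))) = -(n * k) + j * -(n * (M : ZMod N)) by
        push_cast; ring,
      AddChar.map_add_eq_mul]
    ring
  rw [sum_congr rfl fun j _ => hpow j, ← mul_sum]
  by_cases hz : stdAddChar (-(n * (M : ZMod N))) = 1
  · rw [← AddChar.map_zero_eq_one (stdAddChar (N := N)), injective_stdAddChar.eq_iff,
      neg_eq_zero] at hz
    obtain ⟨m, hm, rfl⟩ := exists_eq_natCast_mul_of_mul_eq_zero hLM hz
    rw [hc m hm, mul_zero, zero_mul]
  · rw [geom_sum_eq hz, ← AddChar.map_nsmul_eq_pow, nsmul_eq_mul,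
      show (L : ZMod N) * -(n * (M : ZMod N)) = -(n * ((L * M : ℕ) : ZMod N)) by
        push_cast; ring,
      hLM, natCast_self, mul_zero, neg_zero, AddChar.map_zero_eq_one, sub_self, zero_div,
      mul_zero]

theorem eq_of_cyclicConv_eq_at_multiples {ι : Type*} {L M : ℕ} (hLM : L * M = N)
    (V : ι → ZMod N → ℂ)
    (hrank : ∀ m < M, (Matrix.of fun (r : ι) (j : Fin L) =>
      𝓕 (V r) ((m + j * M : ℕ) : ZMod N)).rank = L)
    {P Q : ZMod N → ℂ} (h : ∀ r, ∀ m < M,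
      cyclicConv P (V r) ((L * m : ℕ) : ZMod N) = cyclicConv Q (V r) ((L * m : ℕ) : ZMod N)) :
    P = Q := by
  have hM : 0 < M := Nat.pos_of_mul_pos_left (hLM ▸ Nat.pos_of_neZero N)
  refine dft.injective (funext fun k => ?_)
  have hj : k.val / M < L := Nat.div_lt_of_lt_mul (by rw [mul_comm, hLM]; exact k.val_lt)
  have hk : k = ((k.val % M + (k.val / M) * M : ℕ) : ZMod N) := by
    rw [Nat.mod_add_div', natCast_zmod_val]
  -- With `m = k mod M`, the matrix `A_m` kills the values of `𝓕 P - 𝓕 Q` at the aliases of `k`.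
  have hv : (fun j : Fin L => (𝓕 P - 𝓕 Q) ((k.val % M + j * M : ℕ) : ZMod N)) = 0 := by
    refine Matrix.mulVec_injective_of_rank_eq_card
      (by rw [Fintype.card_fin]; exact hrank (k.val % M) (Nat.mod_lt _ hM)) ?_
    rw [Matrix.mulVec_zero]
    funext r
    have halias := sum_dft_add_eq_zero_of_eq_zero_at_multiples hLM
      (c := cyclicConv P (V r) - cyclicConv Q (V r)) (fun m hm => sub_eq_zero.2 (h r m hm))
      (k.val % M : ℕ)
    simp only [map_sub, dft_cyclicConv, Pi.sub_apply, Pi.mul_apply, ← Nat.cast_add] at halias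
    simp only [Matrix.mulVec, dotProduct, Matrix.of_apply, Pi.zero_apply]
    rw [Fin.sum_univ_eq_sum_range (fun j => 𝓕 (V r) ((k.val % M + j * M : ℕ) : ZMod N) *
      (𝓕 P - 𝓕 Q) ((k.val % M + j * M : ℕ) : ZMod N)) L, ← halias]
    refine sum_congr rfl fun j _ => ?_
    simp only [Pi.sub_apply]
    ring
  rw [hk]
  exact sub_eq_zero.1 (congrFun hv ⟨k.val / M, hj⟩)

end Aliasing

section Window

noncomputable def sqNorm {N : ℕ} (u : ZMod N → ℂ) : ZMod N → ℂ := fun n => ((‖u n‖ ^ 2 : ℝ) : ℂ)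

theorem eq_of_window_ne_zero {N : ℕ} {w : ZMod N → ℂ} {a : ZMod N} {l : ℕ} (hlN : l ≤ N / 2)
    (hsupp : ∀ n : ZMod N, (∀ j < l, n ≠ a + (j : ZMod N)) → w n = 0) {u : ZMod N}
    (hu : w u ≠ 0) (hu' : w (u + ((l - 1 : ℕ) : ZMod N)) ≠ 0) : u = a := by
  have hmem : ∀ n, w n ≠ 0 → ∃ j < l, n = a + (j : ZMod N) := fun n hn => by
    by_contra! h
    exact hn (hsupp n h)
  obtain ⟨j, hj, rfl⟩ := hmem u hu
  obtain ⟨j', hj', hjj'⟩ := hmem _ hu'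
  have hcast : ((j + (l - 1) : ℕ) : ZMod N) = j' := by
    push_cast
    linear_combination hjj'
  rw [ZMod.natCast_eq_natCast_iff', Nat.mod_eq_of_lt (by omega),
    Nat.mod_eq_of_lt (by omega)] at hcast
  obtain rfl : j = 0 := by omega
  simp

variable {N : ℕ} [NeZero N]

theorem autocorr_window_zero (x w : ZMod N → ℂ) (c : ZMod N) :
    autocorr (fun n => x n * w (c - n)) 0 =
      cyclicConv (sqNorm x) (sqNorm w) c := by
  refine sum_congr rfl fun n _ => ?_
  rw [conjReflect, zero_sub, neg_neg, Complex.mul_conj', sqNorm, sqNorm, norm_mul]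
  push_cast
  ring

theorem autocorr_window_lag {w : ZMod N → ℂ} {a : ZMod N} {l : ℕ}
    (hlN : l ≤ N / 2) (hsupp : ∀ n : ZMod N, (∀ j < l, n ≠ a + (j : ZMod N)) → w n = 0)
    (x : ZMod N → ℂ) (c : ZMod N) :
    autocorr (fun n => x n * w (c - n)) ((l - 1 : ℕ) : ZMod N) =
      x (c - a) * conj (x (c - a - ((l - 1 : ℕ) : ZMod N))) *
        (w a * conj (w (a + ((l - 1 : ℕ) : ZMod N)))) := by
  set d : ZMod N := ((l - 1 : ℕ) : ZMod N)
  simp only [autocorr, cyclicConv, conjReflect]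
  rw [Fintype.sum_eq_single (c - a) fun n hn => ?_]
  · rw [show -(d - (c - a)) = c - a - d by ring, show c - (c - a - d) = a + d by ring,
      sub_sub_cancel, map_mul]
    ring
  · by_contra hne
    have hw : w (c - n) ≠ 0 := fun h => hne (by rw [h]; ring)
    have hw' : w (c - n + d) ≠ 0 := fun h => hne (by
      rw [show c - -(d - n) = c - n + d by ring, h]; simp)
    exact hn (by rw [← eq_of_window_ne_zero hlN hsupp hw hw']; ring)

theorem mul_conj_eq_of_autocorr_window_eq {w : ZMod N → ℂ} {a : ZMod N} {l : ℕ}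
    (hlN : l ≤ N / 2) (hsupp : ∀ n : ZMod N, (∀ j < l, n ≠ a + (j : ZMod N)) → w n = 0)
    (ha : w a ≠ 0) (hb : w (a + ((l - 1 : ℕ) : ZMod N)) ≠ 0) {x y : ZMod N → ℂ} {c : ZMod N}
    (h : autocorr (fun n => y n * w (c - n)) = autocorr (fun n => x n * w (c - n))) :
    x (c - a) * conj (x (c - a - ((l - 1 : ℕ) : ZMod N))) =
      y (c - a) * conj (y (c - a - ((l - 1 : ℕ) : ZMod N))) := by
  have hlag := congrFun h ((l - 1 : ℕ) : ZMod N)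
  rw [autocorr_window_lag hlN hsupp, autocorr_window_lag hlN hsupp] at hlag
  exact (mul_right_cancel₀ (mul_ne_zero ha ((map_ne_zero conj).2 hb)) hlag).symm

end Window

section Measurements

variable {N : ℕ} [NeZero N]

theorem exp_eq_stdAddChar (k : ℕ) (n : ZMod N) :
    Complex.exp (-(2 * Real.pi * Complex.I * (k : ℂ) * (n.val : ℂ)) / (N : ℂ)) =
      stdAddChar (-(n * (k : ZMod N))) := by
  rw [show -(n * (k : ZMod N)) = ((-(n.val * k : ℕ) : ℤ) : ZMod N) by simp, stdAddChar_coe]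
  push_cast
  ring_nf

theorem stft_eq_dft (L : ℕ) (x w : ZMod N → ℂ) (m k : ℕ) :
    stft L x w m k = (N : ℂ)⁻¹ * 𝓕 (fun n => x n * w ((L * m : ℕ) - n)) k := by
  simp only [stft, dft_apply, exp_eq_stdAddChar, smul_eq_mul]
  exact congrArg _ (sum_congr rfl fun n _ => mul_comm _ _)

theorem dftSq_eq_dft (u : ZMod N → ℂ) (k : ℕ) : dftSq u k = (N : ℂ)⁻¹ * 𝓕 (sqNorm u) k := by
  simp only [dftSq, dft_apply, exp_eq_stdAddChar, smul_eq_mul, sqNorm]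
  exact congrArg _ (sum_congr rfl fun n _ => mul_comm _ _)

theorem rank_of_dftSq_eq_rank_of_dft {ι κ : Type*} [Fintype κ] (u : ι → ZMod N → ℂ)
    (k : κ → ℕ) :
    (Matrix.of fun i j => dftSq (u i) (k j)).rank =
      (Matrix.of fun i j => 𝓕 (sqNorm (u i)) (k j)).rank := by
  rw [show (Matrix.of fun i j => dftSq (u i) (k j)) =
      (N : ℂ)⁻¹ • Matrix.of fun i j => 𝓕 (sqNorm (u i)) (k j) by
    ext; simp [dftSq_eq_dft]]
  exact Matrix.rank_smul_of_mem_nonZeroDivisors _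
    (mem_nonZeroDivisors_of_ne_zero (by simp [NeZero.ne N]))

theorem autocorr_window_eq_of_norm_stft_eq {L m : ℕ} {x y w : ZMod N → ℂ}
    (h : ∀ k < N, ‖stft L y w m k‖ = ‖stft L x w m k‖) :
    autocorr (fun n => y n * w ((L * m : ℕ) - n)) =
      autocorr (fun n => x n * w ((L * m : ℕ) - n)) := by
  refine autocorr_eq_of_norm_dft_eq fun k => ?_
  have hk := h k.val k.val_lt
  rwa [stft_eq_dft, stft_eq_dft, norm_mul, norm_mul, natCast_zmod_val,
    mul_right_inj' (by simp [NeZero.ne N])] at hk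

theorem norm_eq_of_autocorr_window_eq {ι : Type*} {L M : ℕ} (hLM : L * M = N)
    (w : ι → ZMod N → ℂ)
    (hrank : ∀ m < M,
      (Matrix.of fun (r : ι) (j : Fin L) => dftSq (w r) (m + j.1 * M)).rank = L)
    {x y : ZMod N → ℂ} (h : ∀ r, ∀ m < M,
      autocorr (fun n => y n * w r ((L * m : ℕ) - n)) =
        autocorr (fun n => x n * w r ((L * m : ℕ) - n)))
    (n : ZMod N) : ‖x n‖ = ‖y n‖ := by
  have hsq : sqNorm x = sqNorm y :=
    eq_of_cyclicConv_eq_at_multiples hLM (fun r => sqNorm (w r))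
      (fun m hm => by rw [← rank_of_dftSq_eq_rank_of_dft]; exact_mod_cast hrank m hm)
      fun r m hm => by rw [← autocorr_window_zero, ← autocorr_window_zero, h r m hm]
  have hn := congrFun hsq n
  simp only [sqNorm, Complex.ofReal_inj] at hn
  exact (pow_left_inj₀ (norm_nonneg _) (norm_nonneg _) two_ne_zero).1 hn

end Measurements

section Phase

theorem SimpleGraph.Preconnected.eq_of_forall_adj {V β : Type*} {G : SimpleGraph V}
    (hG : G.Preconnected) {f : V → β} (hf : ∀ u v, G.Adj u v → f u = f v) (u v : V) :
    f u = f v := by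
  obtain ⟨p⟩ := hG u v
  induction p with
  | nil => rfl
  | cons hadj _ ih => exact (hf _ _ hadj).trans ih

variable {ι : Type*} {x y : ι → ℂ}

theorem mul_conj_eq_of_mem_pair (hnorm : ∀ n, ‖x n‖ = ‖y n‖) {n₁ n₂ : ι}
    (h : x n₁ * conj (x n₂) = y n₁ * conj (y n₂)) {p q : ι} (hp : p = n₁ ∨ p = n₂)
    (hq : q = n₁ ∨ q = n₂) : x p * conj (x q) = y p * conj (y q) := by
  have hdiag : ∀ n, x n * conj (x n) = y n * conj (y n) := fun n => by
    rw [Complex.mul_conj', Complex.mul_conj', hnorm]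
  have hswap : x n₂ * conj (x n₁) = y n₂ * conj (y n₁) := by
    simpa [mul_comm] using congrArg conj h
  rcases hp with rfl | rfl <;> rcases hq with rfl | rfl
  exacts [hdiag _, h, hswap, hdiag _]

theorem div_eq_div_of_mul_conj_eq {x₁ x₂ y₁ y₂ : ℂ} (hx₁ : x₁ ≠ 0) (hx₂ : x₂ ≠ 0)
    (hn : ‖x₁‖ = ‖y₁‖) (h : x₁ * conj x₂ = y₁ * conj y₂) : y₁ / x₁ = y₂ / x₂ := by
  have hsq : x₁ * conj x₁ = y₁ * conj y₁ := by rw [Complex.mul_conj', Complex.mul_conj', hn]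
  have hconj : conj x₁ * x₂ = conj y₁ * y₂ := by simpa using congrArg conj h
  rw [div_eq_div_iff hx₁ hx₂]
  refine mul_left_cancel₀ ((map_ne_zero conj).2 hx₁) ?_
  linear_combination y₁ * hconj - y₂ * hsq

theorem exists_eq_exp_mul_of_norm_eq (hnorm : ∀ n, ‖x n‖ = ‖y n‖)
    (hratio : ∀ n n', x n ≠ 0 → x n' ≠ 0 → y n / x n = y n' / x n') :
    ∃ θ : ℝ, y = fun n => Complex.exp (Complex.I * θ) * x n := by
  have hy : ∀ n, x n = 0 → y n = 0 := fun n hn =>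
    norm_eq_zero.1 (by rw [← hnorm, hn, norm_zero])
  by_cases hx : ∃ n₀, x n₀ ≠ 0
  · obtain ⟨n₀, hn₀⟩ := hx
    refine ⟨Complex.arg (y n₀ / x n₀), funext fun n => ?_⟩
    have hunit : ‖y n₀ / x n₀‖ = 1 := by
      rw [norm_div, ← hnorm, div_self (norm_ne_zero_iff.2 hn₀)]
    have hexp : Complex.exp (Complex.I * Complex.arg (y n₀ / x n₀)) = y n₀ / x n₀ := by
      have h := Complex.norm_mul_exp_arg_mul_I (y n₀ / x n₀)
      rwa [hunit, Complex.ofReal_one, one_mul, mul_comm] at h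
    rw [hexp]
    by_cases hn : x n = 0
    · rw [hn, hy n hn, mul_zero]
    · rw [← hratio n n₀ hn hn₀, div_mul_cancel₀ _ hn]
  · simp only [not_exists, not_not] at hx
    exact ⟨0, funext fun n => by rw [hx n, hy n (hx n), mul_zero]⟩

end Phase

theorem stmt10_general (N L R : ℕ) [NeZero N] (hdvd : L ∣ N)
    (w : Fin R → ZMod N → ℂ) (a : Fin R → ZMod N) (l : Fin R → ℕ)
    (hlN : ∀ r, l r ≤ N / 2)
    (ha : ∀ r, w r (a r) ≠ 0) (hb : ∀ r, w r (a r + ((l r - 1 : ℕ) : ZMod N)) ≠ 0)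
    (hsupp : ∀ r, ∀ n : ZMod N, (∀ j < l r, n ≠ a r + (j : ZMod N)) → w r n = 0)
    (hrank : ∀ m < N / L,
      Matrix.rank (Matrix.of fun (r : Fin R) (j : Fin L) =>
        dftSq (w r) (m + j.1 * (N / L))) = L)
    (x : ZMod N → ℂ)
    (hconn : (SimpleGraph.fromRel (fun n n' : {n : ZMod N // x n ≠ 0} =>
      ∃ m < N / L, ∃ r : Fin R,
        (n.1 = ((L * m : ℕ) : ZMod N) - a r ∨
          n.1 = ((L * m : ℕ) : ZMod N) - a r - ((l r - 1 : ℕ) : ZMod N)) ∧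
        (n'.1 = ((L * m : ℕ) : ZMod N) - a r ∨
          n'.1 = ((L * m : ℕ) : ZMod N) - a r - ((l r - 1 : ℕ) : ZMod N)))).Connected) :
    ∀ y : ZMod N → ℂ,
      (∀ r : Fin R, ∀ m < N / L, ∀ k < N,
        ‖stft L y (w r) m k‖ = ‖stft L x (w r) m k‖) →
      ∃ θ : ℝ, y = fun n => Complex.exp (Complex.I * θ) * x n := by
  intro y hmeas
  have hauto : ∀ r, ∀ m < N / L, autocorr (fun n => y n * w r ((L * m : ℕ) - n)) =
      autocorr (fun n => x n * w r ((L * m : ℕ) - n)) :=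
    fun r m hm => autocorr_window_eq_of_norm_stft_eq (hmeas r m hm)
  have hmag := norm_eq_of_autocorr_window_eq (Nat.mul_div_cancel' hdvd) w hrank hauto
  have hconst : ∀ u v : {n // x n ≠ 0}, y u / x u = y v / x v := by
    refine hconn.preconnected.eq_of_forall_adj ?_
    rintro u v ⟨-, ⟨m, hm, r, hu, hv⟩ | ⟨m, hm, r, hv, hu⟩⟩ <;>
      exact div_eq_div_of_mul_conj_eq u.2 v.2 (hmag u) (mul_conj_eq_of_mem_pair hmag
        (mul_conj_eq_of_autocorr_window_eq (hlN r) (hsupp r) (ha r) (hb r) (hauto r m hm)) hu hv)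
  exact exists_eq_exp_mul_of_norm_eq hmag fun n n' hn hn' => hconst ⟨n, hn⟩ ⟨n', hn'⟩

/-- Main sufficiency theorem: if each window `w_r` has supporting length `l_r ≤ N/2`
(support exactly `[a_r, a_r + l_r - 1] + Nℤ`), each matrix `A_m` has rank `L`, and the
graph `G̃(x, W, L)` is connected, then `x` is determined up to a global phase by the
magnitudes of its multiple-window STFT. -/
theorem stmt10 (N L R : ℕ) [NeZero N] (hL : 0 < L) (hR : 0 < R) (hdvd : L ∣ N)
    (w : Fin R → ZMod N → ℂ) (a : Fin R → ZMod N) (l : Fin R → ℕ)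
    (hl1 : ∀ r, 1 ≤ l r) (hlN : ∀ r, l r ≤ N / 2)
    (ha : ∀ r, w r (a r) ≠ 0) (hb : ∀ r, w r (a r + ((l r - 1 : ℕ) : ZMod N)) ≠ 0)
    (hsupp : ∀ r, ∀ n : ZMod N, (∀ j < l r, n ≠ a r + (j : ZMod N)) → w r n = 0)
    (hrank : ∀ m < N / L,
      Matrix.rank (Matrix.of fun (r : Fin R) (j : Fin L) =>
        dftSq (w r) (m + j.1 * (N / L))) = L)
    (x : ZMod N → ℂ)
    (hconn : (SimpleGraph.fromRel (fun n n' : {n : ZMod N // x n ≠ 0} =>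
      ∃ m < N / L, ∃ r : Fin R,
        (n.1 = ((L * m : ℕ) : ZMod N) - a r ∨
          n.1 = ((L * m : ℕ) : ZMod N) - a r - ((l r - 1 : ℕ) : ZMod N)) ∧
        (n'.1 = ((L * m : ℕ) : ZMod N) - a r ∨
          n'.1 = ((L * m : ℕ) : ZMod N) - a r - ((l r - 1 : ℕ) : ZMod N)))).Connected) :
    ∀ y : ZMod N → ℂ,
      (∀ r : Fin R, ∀ m < N / L, ∀ k < N,
        ‖stft L y (w r) m k‖ = ‖stft L x (w r) m k‖) →
      ∃ θ : ℝ, y = fun n => Complex.exp (Complex.I * θ) * x n :=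
  stmt10_general N L R hdvd w a l hlN ha hb hsupp hrank x hconn
end

section
/- Let w be an N-periodic window with support in [a(w), a(w)+l(w)−1] + Nℤ, l(w) ≤ N/2 and l(w) ≥ 2, and let n_1 ≡ Lm − a(w), n_2 ≡ Lm − a(w) − l(w) + 1 (mod N) with x(n_1) ≠ 0 and x(n_2) ≠ 0. Then |Σ_{k=0}^{N−1} |X_w(Lm,k)|² e^{2πik(l(w)−1)/N}| ≥ (|w(a(w)) w(a(w)+l(w)−1)|/N) · min_{n ∈ V(x)} |x(n)|². -/
open Finset ZMod ComplexConjugate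

namespace ZMod

variable {N : ℕ} [NeZero N]

lemma sum_range_natCast {M : Type*} [AddCommMonoid M] (f : ZMod N → M) :
    ∑ k ∈ range N, f k = ∑ k, f k :=
  sum_nbij' (fun k ↦ (k : ZMod N)) val (by simp) (by simp [val_lt])
    (fun k hk ↦ val_natCast_of_lt (mem_range.1 hk)) (fun k _ ↦ natCast_zmod_val k)
    (fun _ _ ↦ rfl)

lemma stdAddChar_natCast_mul (k c : ℕ) :
    stdAddChar ((k : ZMod N) * (c : ZMod N)) =
      Complex.exp (2 * Real.pi * Complex.I * k * c / N) := by
  simpa [mul_assoc] using stdAddChar_coe (N := N) (k * c : ℤ)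

lemma sum_sq_norm_dft_mul_stdAddChar (Φ : ZMod N → ℂ) (c : ZMod N) :
    ∑ k, ((‖dft Φ k‖ ^ 2 : ℝ) : ℂ) * stdAddChar (k * c) =
      N * ∑ n, Φ (n + c) * conj (Φ n) := by
  have hconj : ∀ k, conj (dft Φ k) = ∑ j, stdAddChar (j * k) * conj (Φ j) := fun k ↦ by
    simp [dft_apply, map_sum, ← AddChar.map_neg_eq_conj]
  have horth : ∀ i j : ZMod N,
      ∑ k, stdAddChar (k * (j + c - i)) = if i = j + c then (N : ℂ) else 0 := by
    intro i j
    rw [AddChar.sum_mulShift _ (isPrimitive_stdAddChar N)]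
    simp [sub_eq_zero, eq_comm]
  calc ∑ k, ((‖dft Φ k‖ ^ 2 : ℝ) : ℂ) * stdAddChar (k * c)
      = ∑ k, ∑ j, ∑ i, Φ i * conj (Φ j) * stdAddChar (k * (j + c - i)) := by
        refine sum_congr rfl fun k _ ↦ ?_
        rw [Complex.ofReal_pow, ← Complex.mul_conj', hconj, dft_apply, sum_mul_sum, sum_comm,
          sum_mul]
        refine sum_congr rfl fun j _ ↦ ?_
        rw [sum_mul]
        refine sum_congr rfl fun i _ ↦ ?_
        rw [show k * (j + c - i) = -(i * k) + j * k + k * c by ring, AddChar.map_add_eq_mul,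
          AddChar.map_add_eq_mul, smul_eq_mul]
        ring
    _ = ∑ j, ∑ i, Φ i * conj (Φ j) * ∑ k, stdAddChar (k * (j + c - i)) := by
        rw [sum_comm]
        simp only [mul_sum]
        exact sum_congr rfl fun j _ ↦ sum_comm
    _ = N * ∑ n, Φ (n + c) * conj (Φ n) := by
        simp [horth, mul_sum, mul_comm]

lemma sum_apply_add_mul_eq_of_support {R : Type*} [NonUnitalNonAssocSemiring R]
    {f g : ZMod N → R} {b : ZMod N} {l : ℕ} (hl : 2 * l ≤ N + 1)
    (hf : ∀ n, f n ≠ 0 → ∃ j < l, n = b - j) (hg : ∀ n, g n ≠ 0 → ∃ j < l, n = b - j) :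
    ∑ n, f (n + ((l - 1 : ℕ) : ZMod N)) * g n = f b * g (b - ((l - 1 : ℕ) : ZMod N)) := by
  rw [sum_eq_single (b - ((l - 1 : ℕ) : ZMod N)) ?_ (by simp), sub_add_cancel]
  intro n _ hn
  by_contra h
  obtain ⟨i, hi, hni⟩ := hf _ (left_ne_zero_of_mul h)
  obtain ⟨j, hj, rfl⟩ := hg _ (right_ne_zero_of_mul h)
  have hcast : ((i + (l - 1) : ℕ) : ZMod N) = j := by
    push_cast
    linear_combination hni
  have hij : i + (l - 1) = j := by
    have := congrArg val hcast
    rwa [val_natCast_of_lt (by omega), val_natCast_of_lt (by omega)] at this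
  exact hn (by rw [show j = l - 1 by omega])

end ZMod

noncomputable def windowedSignal {N : ℕ} (L : ℕ) (x w : ZMod N → ℂ) (m : ℕ) (n : ZMod N) : ℂ :=
  x n * w (((L * m : ℕ) : ZMod N) - n)

section

variable {N : ℕ} [NeZero N] (L : ℕ) (x w : ZMod N → ℂ) (m : ℕ)

lemma stft_eq_inv_mul_dft (k : ℕ) :
    stft L x w m k = (N : ℂ)⁻¹ * dft (windowedSignal L x w m) k := by
  rw [stft, dft_apply]
  congr 1
  refine sum_congr rfl fun n _ ↦ ?_
  have hchar : stdAddChar (-(n * (k : ZMod N))) =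
      Complex.exp (-(2 * Real.pi * Complex.I * k * n.val) / N) := by
    have := stdAddChar_coe (N := N) (-(n.val * k : ℤ))
    push_cast at this
    rw [natCast_zmod_val] at this
    rw [this]
    ring_nf
  rw [smul_eq_mul, mul_comm, hchar, windowedSignal]

lemma sum_range_sq_norm_stft_mul_exp (c : ℕ) :
    ∑ k ∈ range N, ((‖stft L x w m k‖ ^ 2 : ℝ) : ℂ) *
        Complex.exp (2 * Real.pi * Complex.I * k * c / N) =
      (N : ℂ)⁻¹ * ∑ n, windowedSignal L x w m (n + c) * conj (windowedSignal L x w m n) := by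
  set y := windowedSignal L x w m
  have hN : (N : ℂ) ≠ 0 := NeZero.ne _
  calc ∑ k ∈ range N, ((‖stft L x w m k‖ ^ 2 : ℝ) : ℂ) *
        Complex.exp (2 * Real.pi * Complex.I * k * c / N)
      = ∑ k ∈ range N, ((‖(N : ℂ)⁻¹ * dft y k‖ ^ 2 : ℝ) : ℂ) *
          stdAddChar ((k : ZMod N) * (c : ZMod N)) := by
        refine sum_congr rfl fun k _ ↦ ?_
        rw [stft_eq_inv_mul_dft, stdAddChar_natCast_mul]
    _ = (N : ℂ)⁻¹ ^ 2 * ∑ k, ((‖dft y k‖ ^ 2 : ℝ) : ℂ) * stdAddChar (k * (c : ZMod N)) := by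
        rw [sum_range_natCast
          (fun k ↦ ((‖(N : ℂ)⁻¹ * dft y k‖ ^ 2 : ℝ) : ℂ) * stdAddChar (k * (c : ZMod N))), mul_sum]
        simp [mul_pow, mul_assoc]
    _ = (N : ℂ)⁻¹ * ∑ n, y (n + c) * conj (y n) := by
        rw [sum_sq_norm_dft_mul_stdAddChar]
        field_simp

end

lemma le_mul_of_le_sq_of_le_sq {μ a b : ℝ} (ha : 0 ≤ a) (hb : 0 ≤ b) (h1 : μ ≤ a ^ 2)
    (h2 : μ ≤ b ^ 2) : μ ≤ a * b := by
  rcases le_total a b with h | h <;> nlinarith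

open scoped Classical in
theorem stmt18_general (N L : ℕ) [NeZero N]
    (w : ZMod N → ℂ) (a : ZMod N) (l : ℕ)
    (hlN : l ≤ N / 2)
    (hsupp : ∀ n : ZMod N, (∀ j < l, n ≠ a + (j : ZMod N)) → w n = 0)
    (x : ZMod N → ℂ) (m : ℕ)
    (hx1 : x (((L * m : ℕ) : ZMod N) - a) ≠ 0)
    (hx2 : x (((L * m : ℕ) : ZMod N) - a - ((l - 1 : ℕ) : ZMod N)) ≠ 0)
    (hVne : (Finset.univ.filter fun n : ZMod N => x n ≠ 0).Nonempty) :
    ‖∑ k ∈ Finset.range N, ((‖stft L x w m k‖ ^ 2 : ℝ) : ℂ) *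
        Complex.exp (2 * Real.pi * Complex.I * (k : ℂ) * ((l - 1 : ℕ) : ℂ) / (N : ℂ))‖ ≥
      ‖w a * w (a + ((l - 1 : ℕ) : ZMod N))‖ / N *
        ((Finset.univ.filter fun n : ZMod N => x n ≠ 0).inf' hVne fun n => ‖x n‖ ^ 2) := by
  set M : ZMod N := ((L * m : ℕ) : ZMod N)
  have hy : ∀ n, windowedSignal L x w m n = x n * w (M - n) := fun _ ↦ rfl
  have hy_supp : ∀ n, windowedSignal L x w m n ≠ 0 → ∃ j < l, n = M - a - j := fun n hn ↦ by
    by_contra! h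
    refine hn ((hy n).trans (mul_eq_zero_of_right _ (hsupp _ fun j hj he ↦ h j hj ?_)))
    linear_combination -he
  have hsum := sum_range_sq_norm_stft_mul_exp L x w m (l - 1)
  rw [sum_apply_add_mul_eq_of_support (by omega) hy_supp
    (fun n hn ↦ hy_supp n ((map_ne_zero _).mp hn))] at hsum
  have hμ_le : ∀ n, x n ≠ 0 → (univ.filter fun n ↦ x n ≠ 0).inf' hVne (‖x ·‖ ^ 2) ≤ ‖x n‖ ^ 2 :=
    fun n hn ↦ inf'_le _ (by simpa using hn)
  have hμ := le_mul_of_le_sq_of_le_sq (norm_nonneg _) (norm_nonneg _) (hμ_le _ hx1) (hμ_le _ hx2)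
  rw [hsum, ge_iff_le]
  simp only [hy, sub_sub_cancel, norm_mul, norm_inv, Complex.norm_natCast, Complex.norm_conj,
    show M - (M - a - ((l - 1 : ℕ) : ZMod N)) = a + ((l - 1 : ℕ) : ZMod N) by ring]
  exact (mul_le_mul_of_nonneg_left hμ (by positivity)).trans_eq (by ring)

open scoped Classical in
/-- Lower bound
`|∑_k |X_w(Lm,k)|² e^{2πik(l-1)/N}| ≥ (|w(a)w(a+l-1)|/N) · min_{n ∈ V(x)} |x(n)|²`. -/
theorem stmt18 (N L : ℕ) [NeZero N] (hL : 0 < L) (hdvd : L ∣ N)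
    (w : ZMod N → ℂ) (a : ZMod N) (l : ℕ)
    (hl2 : 2 ≤ l) (hlN : l ≤ N / 2)
    (ha : w a ≠ 0) (hb : w (a + ((l - 1 : ℕ) : ZMod N)) ≠ 0)
    (hsupp : ∀ n : ZMod N, (∀ j < l, n ≠ a + (j : ZMod N)) → w n = 0)
    (x : ZMod N → ℂ) (m : ℕ) (hm : m < N / L)
    (hx1 : x (((L * m : ℕ) : ZMod N) - a) ≠ 0)
    (hx2 : x (((L * m : ℕ) : ZMod N) - a - ((l - 1 : ℕ) : ZMod N)) ≠ 0)
    (hVne : (Finset.univ.filter fun n : ZMod N => x n ≠ 0).Nonempty) :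
    ‖∑ k ∈ Finset.range N, ((‖stft L x w m k‖ ^ 2 : ℝ) : ℂ) *
        Complex.exp (2 * Real.pi * Complex.I * (k : ℂ) * ((l - 1 : ℕ) : ℂ) / (N : ℂ))‖ ≥
      ‖w a * w (a + ((l - 1 : ℕ) : ZMod N))‖ / N *
        ((Finset.univ.filter fun n : ZMod N => x n ≠ 0).inf' hVne fun n => ‖x n‖ ^ 2) :=
  stmt18_general N L w a l hlN hsupp x m hx1 hx2 hVne
end
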